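/- Let φ: [0,1] → ℝ be nonnegative, nonincreasing, with ∫_0^1 φ = 1, and suppose φ is piecewise constant with jumps at points 0 < p_1 < ... < p_J < 1 of sizes Δφ_k = φ(p_k^+) - φ(p_k^-) ≤ 0, and value φ(1) on the last piece. Then for every integrable random variable X, M_φ(X) = inf over (ψ_1,...,ψ_J) ∈ ℝ^J of ∑_{k=1}^J Δφ_k·( p_k·ψ_k - E[max(ψ_k - X, 0)] ) - φ(1)·E[X]. -/

import Mathlib

open MeasureTheory Finset

/-!
The quantile function `q` of `X`, viewed as a random variable on `(0, 1)` with Lebesgue measure,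
has the law of `X`, so every expectation in the statement becomes an integral over `(0, 1)`.
Since `φ = φ(1) - ∑_{k : x < p_k} Δφ_k`, the spectral integral splits as
`-∫₀¹ φ q = ∑ₖ Δφ_k ∫₀^{p_k} q - φ(1) E[X]`. For any `q` nondecreasing on `(0, 1)` and each `k`,
`∫₀^{p_k} q = max_c (p_k c - ∫₀¹ (c - q)⁺)`, attained at `c = q(p_k)`. As `Δφ_k ≤ 0`, these
maxima turn into a minimum.
-/

open ProbabilityTheory Filter Topology

noncomputable def quantile (ν : Measure ℝ) (p : ℝ) : ℝ := sInf {x | p ≤ cdf ν x}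

section Quantile

variable {ν : Measure ℝ} {p : ℝ}

lemma nonempty_setOf_le_cdf (hp : p < 1) : {x | p ≤ cdf ν x}.Nonempty :=
  ((tendsto_cdf_atTop ν).eventually (eventually_ge_nhds hp)).exists

lemma bddBelow_setOf_le_cdf (hp : 0 < p) : BddBelow {x | p ≤ cdf ν x} := by
  obtain ⟨x₀, hx₀⟩ := ((tendsto_cdf_atBot ν).eventually (eventually_lt_nhds hp)).exists
  exact ⟨x₀, fun x hx => le_of_not_gt fun hxx₀ =>
    (hx.trans_lt ((monotone_cdf ν hxx₀.le).trans_lt hx₀)).false⟩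

lemma quantile_le_iff (hp₀ : 0 < p) (hp₁ : p < 1) {t : ℝ} : quantile ν p ≤ t ↔ p ≤ cdf ν t := by
  refine ⟨fun h => ?_, fun h => csInf_le (bddBelow_setOf_le_cdf hp₀) h⟩
  have h_right : ∀ s ∈ Set.Ioi t, p ≤ cdf ν s := by
    intro s hs
    obtain ⟨x, hx, hxs⟩ := exists_lt_of_csInf_lt (nonempty_setOf_le_cdf hp₁) (h.trans_lt hs)
    exact hx.trans (monotone_cdf ν hxs.le)
  exact ge_of_tendsto (((cdf ν).right_continuous t).mono Set.Ioi_subset_Ici_self)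
    (eventually_nhdsWithin_of_forall h_right)

lemma monotoneOn_quantile : MonotoneOn (quantile ν) (Set.Ioo 0 1) :=
  fun _ ha _ hb hab => csInf_le_csInf (bddBelow_setOf_le_cdf ha.1) (nonempty_setOf_le_cdf hb.2)
    fun _ hx => hab.trans hx

lemma aemeasurable_quantile : AEMeasurable (quantile ν) (volume.restrict (Set.Ioo 0 1)) :=
  aemeasurable_restrict_of_monotoneOn measurableSet_Ioo monotoneOn_quantile

variable [IsProbabilityMeasure ν]

lemma map_restrict_quantile : (volume.restrict (Set.Ioo 0 1)).map (quantile ν) = ν := by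
  refine Measure.ext_of_Iic _ _ fun t => ?_
  have h_pre : quantile ν ⁻¹' Set.Iic t ∩ Set.Ioo 0 1 = Set.Ioc 0 (cdf ν t) \ {1} := by
    ext u
    simp only [Set.mem_inter_iff, Set.mem_preimage, Set.mem_Iic, Set.mem_Ioo, Set.mem_sdiff,
      Set.mem_Ioc, Set.mem_singleton_iff]
    constructor
    · rintro ⟨hu, hu₀, hu₁⟩
      exact ⟨⟨hu₀, (quantile_le_iff hu₀ hu₁).1 hu⟩, hu₁.ne⟩
    · rintro ⟨⟨hu₀, hut⟩, hu₁⟩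
      have hu₁ : u < 1 := lt_of_le_of_ne (hut.trans (cdf_le_one ν t)) hu₁
      exact ⟨(quantile_le_iff hu₀ hu₁).2 hut, hu₀, hu₁⟩
  rw [Measure.map_apply_of_aemeasurable aemeasurable_quantile measurableSet_Iic,
    Measure.restrict_apply' measurableSet_Ioo, h_pre, measure_sdiff_null (measure_singleton _),
    Real.volume_Ioc, sub_zero, ofReal_cdf]

lemma integrableOn_comp_quantile_iff {f : ℝ → ℝ} (hf : AEStronglyMeasurable f ν) :
    IntegrableOn (fun u => f (quantile ν u)) (Set.Ioo 0 1) ↔ Integrable f ν := by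
  have h := integrable_map_measure (g := f) (by rwa [map_restrict_quantile (ν := ν)])
    aemeasurable_quantile
  rw [map_restrict_quantile] at h
  exact h.symm

lemma integral_eq_setIntegral_comp_quantile {f : ℝ → ℝ} (hf : AEStronglyMeasurable f ν) :
    ∫ x, f x ∂ν = ∫ u in Set.Ioo 0 1, f (quantile ν u) := by
  conv_lhs => rw [← map_restrict_quantile (ν := ν)]
  exact integral_map aemeasurable_quantile (by rwa [map_restrict_quantile (ν := ν)])

end Quantile

lemma cdf_map_eq_toReal {Ω : Type*} [MeasurableSpace Ω] {μ : Measure Ω} [IsProbabilityMeasure μ]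
    {X : Ω → ℝ} (hX : AEMeasurable X μ) (x : ℝ) :
    cdf (μ.map X) x = (μ {ω | X ω ≤ x}).toReal := by
  have := Measure.isProbabilityMeasure_map hX
  rw [cdf_eq_real, measureReal_def, Measure.map_apply_of_aemeasurable hX measurableSet_Iic]
  rfl

section

variable {g : ℝ → ℝ} {p : ℝ}

lemma setIntegral_Ioo_const (hp : 0 ≤ p) (c : ℝ) : ∫ _ in Set.Ioo 0 p, c = p * c := by
  rw [setIntegral_const, Real.volume_real_Ioo_of_le hp, sub_zero, smul_eq_mul]

lemma mul_sub_integral_posPart_le (hg : IntegrableOn g (Set.Ioo 0 1)) (hp₀ : 0 ≤ p) (hp₁ : p ≤ 1)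
    (c : ℝ) : p * c - ∫ u in Set.Ioo 0 1, max (c - g u) 0 ≤ ∫ u in Set.Ioo 0 p, g u := by
  have h_sub : Set.Ioo 0 p ⊆ Set.Ioo (0 : ℝ) 1 := Set.Ioo_subset_Ioo_right hp₁
  have h_pos : IntegrableOn (fun u => max (c - g u) 0) (Set.Ioo 0 1) :=
    ((integrable_const c).sub hg).pos_part
  have h_int : ∫ u in Set.Ioo 0 p, (c - g u) = p * c - ∫ u in Set.Ioo 0 p, g u := by
    rw [integral_sub (integrable_const c) (hg.mono_set h_sub), setIntegral_Ioo_const hp₀]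
  have h_le : ∫ u in Set.Ioo 0 p, (c - g u) ≤ ∫ u in Set.Ioo 0 1, max (c - g u) 0 :=
    calc ∫ u in Set.Ioo 0 p, (c - g u)
        ≤ ∫ u in Set.Ioo 0 p, max (c - g u) 0 :=
          integral_mono ((integrable_const c).sub (hg.mono_set h_sub)) (h_pos.mono_set h_sub)
            fun u => le_max_left _ _
      _ ≤ ∫ u in Set.Ioo 0 1, max (c - g u) 0 :=
          setIntegral_mono_set h_pos (ae_of_all _ fun u => le_max_right _ _) h_sub.eventuallyLE
  linarith

lemma mul_sub_integral_posPart_self (hg : IntegrableOn g (Set.Ioo 0 1))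
    (hmono : MonotoneOn g (Set.Ioo 0 1)) (hp : p ∈ Set.Ioo 0 1) :
    p * g p - ∫ u in Set.Ioo 0 1, max (g p - g u) 0 = ∫ u in Set.Ioo 0 p, g u := by
  have h_sub : Set.Ioo 0 p ⊆ Set.Ioo (0 : ℝ) 1 := Set.Ioo_subset_Ioo_right hp.2.le
  have h_ind : Set.EqOn (fun u => max (g p - g u) 0)
      (Set.indicator (Set.Ioo 0 p) fun u => g p - g u) (Set.Ioo 0 1) := by
    intro u hu
    dsimp only
    by_cases hup : u < p
    · rw [Set.indicator_of_mem (show u ∈ Set.Ioo 0 p from ⟨hu.1, hup⟩),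
        max_eq_left (sub_nonneg.2 (hmono hu hp hup.le))]
    · rw [Set.indicator_of_notMem fun h => hup h.2,
        max_eq_right (sub_nonpos.2 (hmono hp hu (not_lt.1 hup)))]
  rw [setIntegral_congr_fun measurableSet_Ioo h_ind, integral_indicator measurableSet_Ioo,
    Measure.restrict_restrict measurableSet_Ioo, Set.inter_eq_left.2 h_sub,
    integral_sub (integrable_const _) (hg.mono_set h_sub), setIntegral_Ioo_const hp.1.le]
  ring

lemma isGreatest_mul_sub_integral_posPart (hg : IntegrableOn g (Set.Ioo 0 1))
    (hmono : MonotoneOn g (Set.Ioo 0 1)) (hp : p ∈ Set.Ioo 0 1) :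
    IsGreatest (Set.range fun c => p * c - ∫ u in Set.Ioo 0 1, max (c - g u) 0)
      (∫ u in Set.Ioo 0 p, g u) :=
  ⟨⟨g p, mul_sub_integral_posPart_self hg hmono hp⟩,
    by rintro _ ⟨c, rfl⟩; exact mul_sub_integral_posPart_le hg hp.1.le hp.2.le c⟩

end

lemma intervalIntegral_mul_eq_of_piecewise {ι : Type*} [Fintype ι] {φ g : ℝ → ℝ} {c : ℝ}
    {p Δ : ι → ℝ} (hp : ∀ i, p i ≤ 1) (hg : IntegrableOn g (Set.Ioo 0 1))
    (hφ : ∀ x ∈ Set.Ioo (0 : ℝ) 1, φ x = c - ∑ i ∈ univ.filter (fun i => x < p i), Δ i) :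
    ∫ u in (0 : ℝ)..1, φ u * g u =
      c * (∫ u in Set.Ioo 0 1, g u) - ∑ i, Δ i * ∫ u in Set.Ioo 0 (p i), g u := by
  have h_ptw : Set.EqOn (fun u => φ u * g u)
      (fun u => c * g u - ∑ i, (Set.Iio (p i)).indicator (fun u => Δ i * g u) u) (Set.Ioo 0 1) := by
    intro u hu
    simp only [hφ u hu, sub_mul, Finset.sum_mul, Finset.sum_filter, Set.indicator_apply,
      Set.mem_Iio, ite_mul, zero_mul]
  have h_int : ∀ i, IntegrableOn ((Set.Iio (p i)).indicator fun u => Δ i * g u) (Set.Ioo 0 1) :=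
    fun i => (hg.const_mul (Δ i)).indicator measurableSet_Iio
  rw [intervalIntegral.integral_of_le zero_le_one, integral_Ioc_eq_integral_Ioo,
    setIntegral_congr_fun measurableSet_Ioo h_ptw,
    integral_sub (hg.const_mul c) (integrable_finsetSum _ fun i _ => h_int i),
    integral_finsetSum _ fun i _ => h_int i, integral_const_mul, sub_right_inj]
  refine Finset.sum_congr rfl fun i _ => ?_
  rw [integral_indicator measurableSet_Iio, Measure.restrict_restrict measurableSet_Iio,
    Set.Iio_inter_Ioo, min_eq_left (hp i), integral_const_mul]

lemma isLeast_range_sum_mul_sub {ι β : Type*} [Fintype ι] {w : ι → ℝ} (hw : ∀ i, w i ≤ 0)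
    {f : ι → β → ℝ} {a : ι → ℝ} (hf : ∀ i, IsGreatest (Set.range (f i)) (a i)) (b : ℝ) :
    IsLeast (Set.range fun x : ι → β => ∑ i, w i * f i (x i) - b) (∑ i, w i * a i - b) := by
  choose x hx using fun i => (hf i).1
  refine ⟨⟨x, by simp only [hx]⟩, ?_⟩
  rintro _ ⟨y, rfl⟩
  exact sub_le_sub_right (Finset.sum_le_sum fun i _ =>
    mul_le_mul_of_nonpos_left ((hf i).2 ⟨y i, rfl⟩) (hw i)) b

theorem stmt_15_general {Ω : Type*} [MeasurableSpace Ω] (μ : Measure Ω) [IsProbabilityMeasure μ]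
    (X : Ω → ℝ) (hX : Integrable X μ)
    (q : ℝ → ℝ) (hq : ∀ p', q p' = sInf {x | p' ≤ (μ {ω | X ω ≤ x}).toReal})
    (φ : ℝ → ℝ)
    (J : ℕ) (p : Fin J → ℝ) (hp : ∀ k, p k ∈ Set.Ioo (0 : ℝ) 1)
    (Δ : Fin J → ℝ) (hΔneg : ∀ k, Δ k ≤ 0)
    (hpc : ∀ x ∈ Set.Icc (0 : ℝ) 1,
      φ x = φ 1 - ∑ k ∈ univ.filter (fun k : Fin J => x < p k), Δ k) :
    IsGLB
      (Set.range fun ψ : Fin J → ℝ =>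
        (∑ k, Δ k * (p k * ψ k - ∫ ω, max (ψ k - X ω) 0 ∂μ)) - φ 1 * ∫ ω, X ω ∂μ)
      (-∫ p' in (0 : ℝ)..1, φ p' * q p') := by
  have := Measure.isProbabilityMeasure_map hX.aemeasurable
  have hq_eq : q = quantile (μ.map X) :=
    funext fun u => by simp only [hq, quantile, cdf_map_eq_toReal hX.aemeasurable]
  subst hq_eq
  have h_law : ∀ f : ℝ → ℝ, Continuous f →
      ∫ ω, f (X ω) ∂μ = ∫ u in Set.Ioo 0 1, f (quantile (μ.map X) u) :=
    fun f hf => (integral_map hX.aemeasurable hf.aestronglyMeasurable).symm.trans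
      (integral_eq_setIntegral_comp_quantile hf.aestronglyMeasurable)
  have hq_int : IntegrableOn (quantile (μ.map X)) (Set.Ioo 0 1) :=
    (integrableOn_comp_quantile_iff aestronglyMeasurable_id).2
      ((integrable_map_measure aestronglyMeasurable_id hX.aemeasurable).2 hX)
  have h_mean : ∫ ω, X ω ∂μ = ∫ u in Set.Ioo 0 1, quantile (μ.map X) u := h_law id continuous_id
  have h_max : ∀ k, IsGreatest (Set.range fun c => p k * c - ∫ ω, max (c - X ω) 0 ∂μ)
      (∫ u in Set.Ioo 0 (p k), quantile (μ.map X) u) := by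
    intro k
    simp only [fun c => h_law (fun x => max (c - x) 0) (by fun_prop)]
    exact isGreatest_mul_sub_integral_posPart hq_int monotoneOn_quantile (hp k)
  rw [intervalIntegral_mul_eq_of_piecewise (fun k => (hp k).2.le) hq_int
    fun x hx => hpc x (Set.Ioo_subset_Icc_self hx), ← h_mean, neg_sub]
  exact (isLeast_range_sum_mul_sub hΔneg h_max _).isGLB

/-- For a piecewise-constant admissible risk spectrum with jumps Δφ_k ≤ 0 at points
0 < p_1 < ... < p_J < 1, the spectral measure M_φ(X) is the infimum over ψ ∈ ℝ^J of
∑_k Δφ_k (p_k ψ_k - E[max(ψ_k - X, 0)]) - φ(1) E[X]. -/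
theorem stmt_15 {Ω : Type*} [MeasurableSpace Ω] (μ : Measure Ω) [IsProbabilityMeasure μ]
    (X : Ω → ℝ) (hX : Integrable X μ)
    (q : ℝ → ℝ) (hq : ∀ p', q p' = sInf {x | p' ≤ (μ {ω | X ω ≤ x}).toReal})
    (φ : ℝ → ℝ)
    (hφpos : ∀ p' ∈ Set.Icc (0 : ℝ) 1, 0 ≤ φ p') (hφmono : AntitoneOn φ (Set.Icc 0 1))
    (hφint : ∫ p' in (0 : ℝ)..1, φ p' = 1)
    (J : ℕ) (p : Fin J → ℝ) (hpmono : StrictMono p) (hp : ∀ k, p k ∈ Set.Ioo (0 : ℝ) 1)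
    (Δ : Fin J → ℝ) (hΔneg : ∀ k, Δ k ≤ 0)
    (hpc : ∀ x ∈ Set.Icc (0 : ℝ) 1,
      φ x = φ 1 - ∑ k ∈ univ.filter (fun k : Fin J => x < p k), Δ k) :
    IsGLB
      (Set.range fun ψ : Fin J → ℝ =>
        (∑ k, Δ k * (p k * ψ k - ∫ ω, max (ψ k - X ω) 0 ∂μ)) - φ 1 * ∫ ω, X ω ∂μ)
      (-∫ p' in (0 : ℝ)..1, φ p' * q p') :=
  stmt_15_general μ X hX q hq φ J p hp Δ hΔneg hpc
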